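/- arXiv:2311.01368 — 2 statements merged into one kernel-verified Lean document; each statement's English description precedes it below -/
import Mathlib

section
/- Fix 0 < β < 1/3. Then there exists a unique κ* > 0 such that μ₀(κ) = κ / ((1 + βκ²) tanh(κ)) satisfies μ₀'(κ*) = 0, and μ₀ is strictly increasing on (0, κ*) and strictly decreasing on (κ*, ∞). -/
/-!
Writing `μ₀ κ = κ cosh κ / ((1 + βκ²) sinh κ)`, the numerator of `μ₀'` is
`(1 - βκ²) sinh κ cosh κ - κ (1 + βκ²) = (Ψ κ - β) κ² (sinh κ cosh κ + κ)`, where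
`Ψ κ = (sinh κ cosh κ - κ) / (κ² (sinh κ cosh κ + κ))` (`criticalInverseBond`) is the inverse
Bond number for which `κ` is critical. So `μ₀'` has the sign of `Ψ - β`, and it suffices that `Ψ`
decreases strictly from `1/3` to `0` on `(0, ∞)`. The numerator of `Ψ'` is `-2κ cosh κ · g κ` with
`g κ = sinh² κ cosh κ + κ sinh κ - 2κ² cosh κ`, and `g > 0` because `g 0 = g' 0 = 0` while
`g'' = 9 sinh² κ cosh κ - 7κ sinh κ - 2κ² cosh κ > 0` by `sinh κ > κ` and `cosh κ ≥ 1`.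
-/

open Real Set

lemma pos_of_hasDerivAt_pos {f f' : ℝ → ℝ} (hf : ∀ x, HasDerivAt f (f' x) x) (h0 : f 0 = 0)
    (hf' : ∀ x, 0 < x → 0 < f' x) {x : ℝ} (hx : 0 < x) : 0 < f x := by
  have hmono : StrictMonoOn f (Ici 0) :=
    strictMonoOn_of_hasDerivWithinAt_pos (convex_Ici 0)
      (fun y _ => (hf y).continuousAt.continuousWithinAt)
      (fun y _ => (hf y).hasDerivWithinAt)
      (fun y hy => hf' y (by simpa using hy))
  simpa [h0] using hmono self_mem_Ici hx.le hx

lemma two_mul_pow_three_div_three_lt_sinh_mul_cosh_sub_self {x : ℝ} (hx : 0 < x) :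
    2 * x ^ 3 / 3 < sinh x * cosh x - x := by
  have h := pos_of_hasDerivAt_pos (f := fun x => sinh x * cosh x - x - 2 * x ^ 3 / 3)
    (f' := fun x => 2 * (sinh x ^ 2 - x ^ 2))
    (fun y => ((((hasDerivAt_sinh y).mul (hasDerivAt_cosh y)).sub (hasDerivAt_id y)).sub
      (((hasDerivAt_pow 3 y).const_mul 2).div_const 3)).congr_deriv
        (by linear_combination cosh_sq y))
    (by simp) (fun y hy => by nlinarith [self_lt_sinh_iff.2 hy]) hx
  linarith

lemma two_mul_sq_mul_cosh_lt {x : ℝ} (hx : 0 < x) :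
    2 * x ^ 2 * cosh x < sinh x ^ 2 * cosh x + x * sinh x := by
  have hg₂ : ∀ y, 0 < y →
      0 < 9 * sinh y ^ 2 * cosh y - 7 * y * sinh y - 2 * y ^ 2 * cosh y := by
    intro y hy
    have hs := self_lt_sinh_iff.2 hy
    have hsc : y < sinh y * cosh y := by nlinarith [one_le_cosh y]
    have hsplit : 9 * sinh y ^ 2 * cosh y - 7 * y * sinh y - 2 * y ^ 2 * cosh y =
        7 * sinh y * (sinh y * cosh y - y) + 2 * cosh y * ((sinh y - y) * (sinh y + y)) := by ring
    rw [hsplit]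
    exact add_pos (mul_pos (by linarith) (sub_pos.2 hsc))
      (mul_pos (by linarith [cosh_pos y]) (mul_pos (sub_pos.2 hs) (by linarith)))
  have hg₁ : ∀ y, 0 < y → 0 < 3 * sinh y * cosh y ^ 2 - 3 * y * cosh y - 2 * y ^ 2 * sinh y :=
    fun y hy => pos_of_hasDerivAt_pos
      (fun z => (((((hasDerivAt_sinh z).const_mul 3).mul ((hasDerivAt_cosh z).pow 2)).sub
        (((hasDerivAt_id z).const_mul 3).mul (hasDerivAt_cosh z))).sub
        (((hasDerivAt_pow 2 z).const_mul 2).mul (hasDerivAt_sinh z))).congr_deriv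
          (by
            simp only [id_eq, Pi.pow_apply]
            push_cast
            linear_combination (3 * cosh z) * cosh_sq z))
      (by simp) hg₂ hy
  have h := pos_of_hasDerivAt_pos
    (f := fun y => sinh y ^ 2 * cosh y + y * sinh y - 2 * y ^ 2 * cosh y)
    (fun z => (((((hasDerivAt_sinh z).pow 2).mul (hasDerivAt_cosh z)).add
        ((hasDerivAt_id z).mul (hasDerivAt_sinh z))).sub
        (((hasDerivAt_pow 2 z).const_mul 2).mul (hasDerivAt_cosh z))).congr_deriv
          (by
            simp only [id_eq, Pi.pow_apply]
            push_cast
            linear_combination (-sinh z) * cosh_sq z))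
    (by simp) hg₁ hx
  linarith

noncomputable def criticalInverseBond (κ : ℝ) : ℝ :=
  (sinh κ * cosh κ - κ) / (κ ^ 2 * (sinh κ * cosh κ + κ))

lemma hasDerivAt_criticalInverseBond {κ : ℝ} (hκ : 0 < κ) :
    HasDerivAt criticalInverseBond
      (-2 * κ * cosh κ * (sinh κ ^ 2 * cosh κ + κ * sinh κ - 2 * κ ^ 2 * cosh κ) /
        (κ ^ 2 * (sinh κ * cosh κ + κ)) ^ 2) κ := by
  have hs := sinh_pos_iff.2 hκ
  have hD : κ ^ 2 * (sinh κ * cosh κ + κ) ≠ 0 := by positivity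
  have h := (((hasDerivAt_sinh κ).mul (hasDerivAt_cosh κ)).sub (hasDerivAt_id κ)).div
    ((hasDerivAt_pow 2 κ).mul (((hasDerivAt_sinh κ).mul (hasDerivAt_cosh κ)).add
      (hasDerivAt_id κ))) hD
  refine h.congr_deriv ?_
  congr 1
  simp only [Pi.mul_apply, Pi.sub_apply, Pi.add_apply, id_eq]
  push_cast
  linear_combination (-2 * κ ^ 3) * cosh_sq κ

lemma strictAntiOn_criticalInverseBond : StrictAntiOn criticalInverseBond (Ioi 0) := by
  refine strictAntiOn_of_hasDerivWithinAt_neg (convex_Ioi 0)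
    (fun x hx => (hasDerivAt_criticalInverseBond hx).continuousAt.continuousWithinAt)
    (fun x hx => (hasDerivAt_criticalInverseBond (interior_subset hx)).hasDerivWithinAt)
    (fun x hx => ?_)
  rw [interior_Ioi] at hx
  have hx : 0 < x := hx
  have hs := sinh_pos_iff.2 hx
  have hg := two_mul_sq_mul_cosh_lt hx
  refine div_neg_of_neg_of_pos ?_ (by positivity)
  have := mul_pos (mul_pos hx (cosh_pos x)) (sub_pos.2 hg)
  linarith

lemma criticalInverseBond_lt_inv_sq {x : ℝ} (hx : 0 < x) :
    criticalInverseBond x < (x ^ 2)⁻¹ := by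
  have hs := sinh_pos_iff.2 hx
  rw [criticalInverseBond, div_lt_iff₀ (by positivity), inv_mul_eq_div,
    lt_div_iff₀ (by positivity)]
  nlinarith [pow_pos hx 3]

lemma lt_criticalInverseBond {β x : ℝ} (hx : 0 < x) (h : β * (3 + x ^ 2) < 1) :
    β < criticalInverseBond x := by
  have hN := two_mul_pow_three_div_three_lt_sinh_mul_cosh_sub_self hx
  have h1 : 0 < 1 - β * x ^ 2 := by rcases le_or_gt 0 β with hβ | hβ <;> nlinarith
  rw [criticalInverseBond, lt_div_iff₀ (by positivity)]
  nlinarith [mul_pos (sub_pos.2 hN) h1, pow_pos hx 3]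

lemma exists_criticalInverseBond_eq {β : ℝ} (hβ0 : 0 < β) (hβ : β < 1 / 3) :
    ∃ κ, 0 < κ ∧ criticalInverseBond κ = β := by
  set a := 1 - 3 * β
  have ha : 0 < a := by linarith
  have hβa : β < criticalInverseBond a := lt_criticalInverseBond ha (by nlinarith)
  have hβb : criticalInverseBond β⁻¹ < β := by
    calc criticalInverseBond β⁻¹
        < (β⁻¹ ^ 2)⁻¹ := criticalInverseBond_lt_inv_sq (inv_pos.2 hβ0)
      _ = β ^ 2 := by rw [inv_pow, inv_inv]
      _ < β := by nlinarith
  have hab : a ≤ β⁻¹ := by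
    have : 1 < β⁻¹ := one_lt_inv_iff₀.2 ⟨hβ0, by linarith⟩
    linarith
  have hcont : ContinuousOn criticalInverseBond (Icc a β⁻¹) := fun x hx =>
    (hasDerivAt_criticalInverseBond (ha.trans_le hx.1)).continuousAt.continuousWithinAt
  obtain ⟨κ, hκ, hκβ⟩ := intermediate_value_Icc' hab hcont ⟨hβb.le, hβa.le⟩
  exact ⟨κ, ha.trans_le hκ.1, hκβ⟩

lemma hasDerivAt_div_mul_tanh {β κ : ℝ} (hβ : 0 ≤ β) (hκ : 0 < κ) :
    HasDerivAt (fun κ : ℝ => κ / ((1 + β * κ ^ 2) * tanh κ))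
      ((criticalInverseBond κ - β) *
        (κ ^ 2 * (sinh κ * cosh κ + κ) / ((1 + β * κ ^ 2) * sinh κ) ^ 2)) κ := by
  have hs := sinh_pos_iff.2 hκ
  have hden : (1 + β * κ ^ 2) * sinh κ ≠ 0 := by positivity
  have hfun : (fun κ : ℝ => κ / ((1 + β * κ ^ 2) * tanh κ)) =
      fun κ => κ * cosh κ / ((1 + β * κ ^ 2) * sinh κ) := by
    funext x
    rw [tanh_eq_sinh_div_cosh, mul_div_assoc', div_div_eq_mul_div]
  rw [hfun]
  refine (((hasDerivAt_id κ).mul (hasDerivAt_cosh κ)).div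
    ((((hasDerivAt_pow 2 κ).const_mul β).const_add 1).mul (hasDerivAt_sinh κ)) hden).congr_deriv ?_
  have hF : (criticalInverseBond κ - β) * (κ ^ 2 * (sinh κ * cosh κ + κ)) =
      (1 - β * κ ^ 2) * (sinh κ * cosh κ) - κ * (1 + β * κ ^ 2) := by
    rw [criticalInverseBond]
    field_simp
    ring
  rw [mul_div_assoc', hF]
  simp only [Pi.mul_apply, id_eq]
  congr 1
  linear_combination (-(1 + β * κ ^ 2) * κ) * cosh_sq κ

lemma unimodal_of_hasDerivAt_sub_mul {f ψ w : ℝ → ℝ} {a c : ℝ} (ha : 0 < a)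
    (hf : ∀ x, 0 < x → HasDerivAt f ((ψ x - c) * w x) x) (hw : ∀ x, 0 < x → 0 < w x)
    (hψ : StrictAntiOn ψ (Ioi 0)) (hψa : ψ a = c) :
    deriv f a = 0 ∧ (∀ x, 0 < x → deriv f x = 0 → x = a) ∧
      StrictMonoOn f (Ioo 0 a) ∧ StrictAntiOn f (Ioi a) := by
  refine ⟨by simp [(hf a ha).deriv, hψa], fun x hx hfx => ?_, ?_, ?_⟩
  · rw [(hf x hx).deriv, mul_eq_zero, sub_eq_zero, ← hψa] at hfx
    exact hψ.injOn hx ha (hfx.resolve_right (hw x hx).ne')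
  · refine strictMonoOn_of_hasDerivWithinAt_pos (convex_Ioo 0 a)
      (fun x hx => (hf x hx.1).continuousAt.continuousWithinAt)
      (fun x hx => (hf x (interior_subset hx).1).hasDerivWithinAt) (fun x hx => ?_)
    rw [interior_Ioo] at hx
    exact mul_pos (sub_pos.2 (hψa ▸ hψ hx.1 ha hx.2)) (hw x hx.1)
  · have hpos : ∀ x ∈ Ioi a, 0 < x := fun x hx => ha.trans hx
    refine strictAntiOn_of_hasDerivWithinAt_neg (convex_Ioi a)
      (fun x hx => (hf x (hpos x hx)).continuousAt.continuousWithinAt)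
      (fun x hx => (hf x (hpos x (interior_subset hx))).hasDerivWithinAt) (fun x hx => ?_)
    rw [interior_Ioi] at hx
    exact mul_neg_of_neg_of_pos (sub_neg.2 (hψa ▸ hψ ha (hpos x hx) hx)) (hw x (hpos x hx))

theorem stmt_3 (β : ℝ) (hβ0 : 0 < β) (hβ : β < 1 / 3) :
    ∃ κs : ℝ, 0 < κs ∧
      deriv (fun κ : ℝ => κ / ((1 + β * κ ^ 2) * Real.tanh κ)) κs = 0 ∧
      (∀ κ : ℝ, 0 < κ →
        deriv (fun κ : ℝ => κ / ((1 + β * κ ^ 2) * Real.tanh κ)) κ = 0 → κ = κs) ∧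
      StrictMonoOn (fun κ : ℝ => κ / ((1 + β * κ ^ 2) * Real.tanh κ)) (Set.Ioo 0 κs) ∧
      StrictAntiOn (fun κ : ℝ => κ / ((1 + β * κ ^ 2) * Real.tanh κ)) (Set.Ioi κs) := by
  obtain ⟨κs, hκs, hκsβ⟩ := exists_criticalInverseBond_eq hβ0 hβ
  refine ⟨κs, hκs, unimodal_of_hasDerivAt_sub_mul hκs
    (fun κ hκ => hasDerivAt_div_mul_tanh hβ0.le hκ) (fun κ hκ => ?_)
    strictAntiOn_criticalInverseBond hκsβ⟩
  have hs := sinh_pos_iff.2 hκ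
  positivity
end

section
/- For β ≥ 1/3 and μ₀ ∈ (0,1), the function σ₋(k) = k − √(μ₀ k tanh(k)(1 + βk²)) is concave on (0, ∞). -/
/-!
Since `√(μ₀ g) = √μ₀ √g` for `g k = k tanh k (1 + β k²)`, it suffices that `√g` is convex, i.e.
that `g'² ≤ 2 g g''`. With `S = sinh k` and `C = cosh k`, `cosh⁴ k (2 g g'' - g'²)` is a
polynomial in `β, k, S, C`, which is nondecreasing in `β ≥ 1/3`. At `β = 1/3` it is, for `k ≥ 1`,
a convex quadratic in `S²` that is already nonnegative and increasing at `S² = (k + k³/6)²`. For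
`k ≤ 1` it behaves like `8/9 k⁶`, which beats the `O(k⁷)` error of the Taylor bounds for `sinh`
and `cosh`.
-/

open Real Set Finset

theorem convexOn_sqrt_of_hasDerivAt {s : Set ℝ} (hs : Convex ℝ s) (hso : IsOpen s)
    {g g' g'' : ℝ → ℝ} (hg : ∀ x ∈ s, HasDerivAt g (g' x) x)
    (hg' : ∀ x ∈ s, HasDerivAt g' (g'' x) x) (hpos : ∀ x ∈ s, 0 < g x)
    (h : ∀ x ∈ s, g' x ^ 2 ≤ 2 * g x * g'' x) :
    ConvexOn ℝ s fun x => √(g x) := by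
  have hsqrt (x) (hx : x ∈ s) : HasDerivAt (fun y => √(g y)) (g' x / (2 * √(g x))) x :=
    (hg x hx).sqrt (hpos x hx).ne'
  refine convexOn_of_hasDerivWithinAt2_nonneg hs
    (fun x hx => (hsqrt x hx).continuousAt.continuousWithinAt)
    (fun x hx => (hsqrt x (interior_subset hx)).hasDerivWithinAt)
    (fun x hx => ((hg' x (interior_subset hx)).div
      ((hsqrt x (interior_subset hx)).const_mul 2)
      (mul_pos two_pos (sqrt_pos.2 (hpos x (interior_subset hx)))).ne').hasDerivWithinAt) ?_
  rw [hso.interior_eq]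
  intro x hx
  have hr : 0 < √(g x) := sqrt_pos.2 (hpos x hx)
  have hnum : g'' x * (2 * √(g x)) - g' x * (2 * (g' x / (2 * √(g x))))
      = (2 * g x * g'' x - g' x ^ 2) / √(g x) := by
    field_simp
    rw [sq_sqrt (hpos x hx).le]
  rw [hnum]
  exact div_nonneg (div_nonneg (sub_nonneg.2 (h x hx)) hr.le) (sq_nonneg _)

theorem sum_range_le_sinh {x : ℝ} (hx : 0 ≤ x) (n : ℕ) :
    ∑ i ∈ range n, x ^ (2 * i + 1) / (2 * i + 1).factorial ≤ sinh x :=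
  sum_le_hasSum _ (fun _ _ => by positivity) (hasSum_sinh x)

theorem sum_range_le_cosh {x : ℝ} (hx : 0 ≤ x) (n : ℕ) :
    ∑ i ∈ range n, x ^ (2 * i) / (2 * i).factorial ≤ cosh x :=
  sum_le_hasSum _ (fun _ _ => by positivity) (hasSum_cosh x)

theorem sinh_le_of_le_one {x : ℝ} (h0 : 0 ≤ x) (h1 : x ≤ 1) :
    sinh x ≤ x + x ^ 3 / 6 + x ^ 5 / 120 + x ^ 7 / 2520 := by
  have hx : |x| ≤ 1 := abs_le.2 ⟨by linarith, h1⟩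
  have hp := (abs_le.1 (exp_bound hx (n := 8) (by norm_num))).2
  have hm := (abs_le.1 (exp_bound (x := -x) (by rwa [abs_neg]) (n := 8) (by norm_num))).1
  rw [abs_neg, abs_of_nonneg h0] at hm
  rw [abs_of_nonneg h0] at hp
  norm_num [Finset.sum_range_succ, Nat.factorial, Odd.neg_pow (by decide : Odd 3),
    Odd.neg_pow (by decide : Odd 5), Odd.neg_pow (by decide : Odd 7)] at hp hm
  have : x ^ 8 ≤ x ^ 7 := pow_le_pow_of_le_one h0 h1 (by norm_num)
  rw [sinh_eq]
  linarith [pow_nonneg h0 7]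

theorem hasDerivAt_tanh (x : ℝ) : HasDerivAt tanh (1 - tanh x ^ 2) x := by
  have h := (hasDerivAt_sinh x).div (hasDerivAt_cosh x) (cosh_pos x).ne'
  rw [show tanh = sinh / cosh from funext tanh_eq_sinh_div_cosh]
  refine h.congr_deriv ?_
  rw [Pi.div_apply]
  field_simp

/-- `cosh k ^ 4 * (2 g g'' - g' ^ 2)` for `g k = k tanh k (1 + β k ^ 2)`, written in terms of
`S = sinh k`, `C = cosh k` and reduced with `C ^ 2 = S ^ 2 + 1`. -/
def convexityDefect (β k S C : ℝ) : ℝ :=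
  (3 * β ^ 2 * k ^ 4 + 6 * β * k ^ 2 - 1) * (S ^ 4 + S ^ 2)
    + 2 * k * (1 + β * k ^ 2) * (1 + 3 * β * k ^ 2) * S * C
    - k ^ 2 * (1 + β * k ^ 2) ^ 2 * (1 + 4 * S ^ 2)

theorem convexityDefect_eq (β k S C : ℝ) :
    convexityDefect β k S C = convexityDefect (1 / 3) k S C
      + 2 * (β - 1 / 3) * k ^ 2 * ((k ^ 2 + 3) * (S ^ 4 + S ^ 2) + 2 * k * (2 + k ^ 2) * S * C
          - k ^ 2 * (1 + k ^ 2 / 3) * (1 + 4 * S ^ 2))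
      + (β - 1 / 3) ^ 2 * k ^ 4
        * (3 * (S ^ 4 + S ^ 2) + 6 * k * S * C - k ^ 2 * (1 + 4 * S ^ 2)) := by
  unfold convexityDefect
  ring

theorem le_convexityDefect_third_taylor (k : ℝ) :
    8 / 9 * k ^ 6
      ≤ convexityDefect (1 / 3) k (k + k ^ 3 / 6 + k ^ 5 / 120) (1 + k ^ 2 / 2 + k ^ 4 / 24) := by
  rw [← sub_nonneg]
  unfold convexityDefect
  ring_nf
  positivity

section DefectThird

variable {k S C : ℝ}

theorem convexityDefect_third_nonneg_of_one_le (hk1 : 1 ≤ k) (hS : 0 < S) (hCS : S ≤ C)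
    (hlb : k + k ^ 3 / 6 ≤ S) : 0 ≤ convexityDefect (1 / 3) k S C := by
  have hk : 0 < k := one_pos.trans_le hk1
  have h2 : (k + k ^ 3 / 6) ^ 2 ≤ S ^ 2 := pow_le_pow_left₀ (by positivity) hlb 2
  have ha : 0 ≤ k ^ 4 / 3 + 2 * k ^ 2 - 1 := by nlinarith
  have hval : 0 ≤ (k ^ 4 / 3 + 2 * k ^ 2 - 1) * ((k + k ^ 3 / 6) ^ 2) ^ 2
      + (2 * k * (1 + k ^ 2) * (1 + k ^ 2 / 3) + (k ^ 4 / 3 + 2 * k ^ 2 - 1)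
        - 4 * k ^ 2 * (1 + k ^ 2 / 3) ^ 2) * (k + k ^ 3 / 6) ^ 2
      - k ^ 2 * (1 + k ^ 2 / 3) ^ 2 := by
    obtain ⟨u, hu, rfl⟩ : ∃ u, 0 ≤ u ∧ k = 1 + u := ⟨k - 1, by linarith, by ring⟩
    ring_nf
    positivity
  have hslope : 0 ≤ 2 * (k ^ 4 / 3 + 2 * k ^ 2 - 1) * (k + k ^ 3 / 6) ^ 2
      + (2 * k * (1 + k ^ 2) * (1 + k ^ 2 / 3) + (k ^ 4 / 3 + 2 * k ^ 2 - 1)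
        - 4 * k ^ 2 * (1 + k ^ 2 / 3) ^ 2) := by
    obtain ⟨u, hu, rfl⟩ : ∃ u, 0 ≤ u ∧ k = 1 + u := ⟨k - 1, by linarith, by ring⟩
    ring_nf
    positivity
  unfold convexityDefect
  nlinarith [mul_nonneg (mul_nonneg (mul_nonneg hk.le hS.le) (sub_nonneg.2 hCS))
      (show (0:ℝ) ≤ 2 * (1 + k ^ 2) * (1 + k ^ 2 / 3) by positivity),
    mul_nonneg ha (sq_nonneg (S ^ 2 - (k + k ^ 3 / 6) ^ 2)),
    mul_nonneg hslope (sub_nonneg.2 h2)]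

theorem convexityDefect_third_sub_le (hk : 0 ≤ k) (hk1 : k ≤ 1) (hS : S ≤ 2)
    {L M : ℝ} (hL : 0 ≤ L) (hM : 0 ≤ M) (hLS : L ≤ S) (hMC : M ≤ C) :
    convexityDefect (1 / 3) k L M - convexityDefect (1 / 3) k S C ≤ 68 * (S - L) := by
  have hSL : 0 ≤ S - L := sub_nonneg.2 hLS
  have h2 : S ^ 2 - L ^ 2 ≤ 4 * (S - L) := by nlinarith
  have h4 : S ^ 4 + S ^ 2 - (L ^ 4 + L ^ 2) ≤ 36 * (S - L) := by
    have : (S + L) * (S ^ 2 + L ^ 2) ≤ 32 := by nlinarith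
    nlinarith [mul_le_mul_of_nonneg_left this hSL]
  have ha : -1 ≤ k ^ 4 / 3 + 2 * k ^ 2 - 1 := by nlinarith
  have hE : k ^ 2 * (1 + k ^ 2 / 3) ^ 2 ≤ 16 / 9 := by
    have : k ^ 2 ≤ 1 := pow_le_one₀ hk hk1
    nlinarith
  have hSC : 0 ≤ 2 * k * (1 + k ^ 2 / 3) * (1 + k ^ 2) * (S * C - L * M) :=
    mul_nonneg (by positivity) (sub_nonneg.2 (mul_le_mul hLS hMC hM (hL.trans hLS)))
  have hL2 : 0 ≤ S ^ 2 - L ^ 2 := sub_nonneg.2 (pow_le_pow_left₀ hL hLS 2)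
  have hL4 : 0 ≤ S ^ 4 + S ^ 2 - (L ^ 4 + L ^ 2) := by
    nlinarith [pow_le_pow_left₀ hL hLS 4]
  have key : convexityDefect (1 / 3) k L M - convexityDefect (1 / 3) k S C
      = -(k ^ 4 / 3 + 2 * k ^ 2 - 1) * (S ^ 4 + S ^ 2 - (L ^ 4 + L ^ 2))
        - 2 * k * (1 + k ^ 2 / 3) * (1 + k ^ 2) * (S * C - L * M)
        + 4 * (k ^ 2 * (1 + k ^ 2 / 3) ^ 2) * (S ^ 2 - L ^ 2) := by
    unfold convexityDefect
    ring
  rw [key]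
  nlinarith [mul_le_mul_of_nonneg_right ha hL4, mul_le_mul_of_nonneg_right hE hL2]

theorem convexityDefect_third_nonneg_of_le_one (hk : 0 ≤ k) (hk1 : k ≤ 1)
    (hSl : k + k ^ 3 / 6 + k ^ 5 / 120 ≤ S)
    (hSu : S ≤ k + k ^ 3 / 6 + k ^ 5 / 120 + k ^ 7 / 2520)
    (hC : 1 + k ^ 2 / 2 + k ^ 4 / 24 ≤ C) : 0 ≤ convexityDefect (1 / 3) k S C := by
  have hS2 : S ≤ 2 := by
    nlinarith [pow_le_one₀ hk hk1 (n := 3), pow_le_one₀ hk hk1 (n := 5),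
      pow_le_one₀ hk hk1 (n := 7)]
  have hlow := le_convexityDefect_third_taylor k
  have hdiff := convexityDefect_third_sub_le hk hk1 hS2 (by positivity) (by positivity) hSl hC
  have h76 : k ^ 7 ≤ k ^ 6 := pow_le_pow_of_le_one hk hk1 (by norm_num)
  nlinarith [pow_nonneg hk 6]

end DefectThird

theorem convexityDefect_third_le {β k S C : ℝ} (hβ : 1 / 3 ≤ β) (hk : 0 < k) (hS : 0 < S)
    (hCS : S ≤ C) (hlb : k + k ^ 3 / 6 ≤ S) :
    convexityDefect (1 / 3) k S C ≤ convexityDefect β k S C := by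
  have hγ : 0 ≤ β - 1 / 3 := by linarith
  have hS2 : k ^ 2 + k ^ 4 / 3 ≤ S ^ 2 := by
    nlinarith [mul_le_mul hlb hlb (by positivity) hS.le, pow_nonneg hk.le 6]
  have hkSC : 0 ≤ k * S * (C - S) := mul_nonneg (mul_nonneg hk.le hS.le) (sub_nonneg.2 hCS)
  rw [convexityDefect_eq β, add_assoc, le_add_iff_nonneg_right]
  refine add_nonneg (mul_nonneg (by positivity) ?_) (mul_nonneg (by positivity) ?_)
  · nlinarith [mul_nonneg hkSC (show (0:ℝ) ≤ 4 + 2 * k ^ 2 by positivity),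
      mul_nonneg (sq_nonneg (S ^ 2 - (k ^ 2 + k ^ 4 / 3))) (show (0:ℝ) ≤ 3 + k ^ 2 by positivity),
      mul_nonneg (sub_nonneg.2 hS2) (show (0:ℝ) ≤ 3 + 4 * k + 3 * k ^ 2 + 2 * k ^ 3
        + 8 / 3 * k ^ 4 + 2 / 3 * k ^ 6 by positivity),
      pow_nonneg hk.le 10, pow_nonneg hk.le 8, pow_nonneg hk.le 7, pow_nonneg hk.le 6,
      pow_nonneg hk.le 5, pow_nonneg hk.le 4, pow_nonneg hk.le 3, pow_nonneg hk.le 2]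
  · nlinarith [sq_nonneg (S ^ 2 - (k ^ 2 + k ^ 4 / 3)),
      mul_nonneg (sub_nonneg.2 hS2) (show (0:ℝ) ≤ 2 * k ^ 4 + 2 * k ^ 2 + 6 * k + 3 by positivity),
      pow_nonneg hk.le 8, pow_nonneg hk.le 6, pow_nonneg hk.le 5, pow_nonneg hk.le 3,
      pow_nonneg hk.le 2]

theorem convexityDefect_nonneg {β k : ℝ} (hβ : 1 / 3 ≤ β) (hk : 0 < k) :
    0 ≤ convexityDefect β k (sinh k) (cosh k) := by
  have hS : 0 < sinh k := sinh_pos_iff.2 hk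
  have hCS : sinh k ≤ cosh k := (sinh_lt_cosh k).le
  have hS5 : k + k ^ 3 / 6 + k ^ 5 / 120 ≤ sinh k := by
    have := sum_range_le_sinh hk.le 3
    norm_num [Finset.sum_range_succ, Nat.factorial] at this
    exact this
  have hS3 : k + k ^ 3 / 6 ≤ sinh k := by nlinarith [pow_pos hk 5]
  have hC4 : 1 + k ^ 2 / 2 + k ^ 4 / 24 ≤ cosh k := by
    have := sum_range_le_cosh hk.le 3
    norm_num [Finset.sum_range_succ, Nat.factorial] at this
    exact this
  refine le_trans ?_ (convexityDefect_third_le hβ hk hS hCS hS3)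
  rcases le_or_gt k 1 with hk1 | hk1
  · exact convexityDefect_third_nonneg_of_le_one hk.le hk1 hS5 (sinh_le_of_le_one hk.le hk1) hC4
  · exact convexityDefect_third_nonneg_of_one_le hk1.le hS hCS hS3

section

variable (β : ℝ)

theorem hasDerivAt_mul_tanh_mul (k : ℝ) :
    HasDerivAt (fun k => k * tanh k * (1 + β * k ^ 2))
      ((1 + 3 * β * k ^ 2) * tanh k + (k + β * k ^ 3) * (1 - tanh k ^ 2)) k := by
  have := ((hasDerivAt_id k).mul (hasDerivAt_tanh k)).mul
    (((hasDerivAt_pow 2 k).const_mul β).const_add 1)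
  refine this.congr_deriv ?_
  simp only [one_mul, id_eq, Pi.mul_apply, Nat.cast_ofNat, Nat.add_one_sub_one, pow_one]
  ring

theorem hasDerivAt_deriv_mul_tanh_mul (k : ℝ) :
    HasDerivAt (fun k => (1 + 3 * β * k ^ 2) * tanh k + (k + β * k ^ 3) * (1 - tanh k ^ 2))
      (6 * β * k * tanh k + 2 * (1 + 3 * β * k ^ 2) * (1 - tanh k ^ 2)
        - 2 * (k + β * k ^ 3) * tanh k * (1 - tanh k ^ 2)) k := by
  have hT := hasDerivAt_tanh k
  have := ((((hasDerivAt_pow 2 k).const_mul (3 * β)).const_add 1).mul hT).add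
    (((hasDerivAt_id k).add ((hasDerivAt_pow 3 k).const_mul β)).mul
      ((hT.pow 2).const_sub 1))
  refine this.congr_deriv ?_
  simp only [Nat.cast_ofNat, Nat.add_one_sub_one, pow_one, Pi.pow_apply, Pi.add_apply, id_eq,
    mul_neg]
  ring

theorem two_mul_mul_deriv2_sub_deriv_sq (k : ℝ) :
    2 * (k * tanh k * (1 + β * k ^ 2))
        * (6 * β * k * tanh k + 2 * (1 + 3 * β * k ^ 2) * (1 - tanh k ^ 2)
          - 2 * (k + β * k ^ 3) * tanh k * (1 - tanh k ^ 2))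
      - ((1 + 3 * β * k ^ 2) * tanh k + (k + β * k ^ 3) * (1 - tanh k ^ 2)) ^ 2
      = convexityDefect β k (sinh k) (cosh k) / cosh k ^ 4 := by
  have hc := (cosh_pos k).ne'
  have hD : 1 - tanh k ^ 2 = 1 / cosh k ^ 2 := by
    rw [tanh_eq_sinh_div_cosh]
    field_simp
    linear_combination cosh_sq k
  rw [hD, tanh_eq_sinh_div_cosh]
  unfold convexityDefect
  field_simp
  linear_combination (3 * β ^ 2 * k ^ 4 + 6 * β * k ^ 2 - 1) * sinh k ^ 2 * cosh_sq k

theorem mul_tanh_mul_pos {k : ℝ} (hβ : 0 ≤ β) (hk : 0 < k) : 0 < k * tanh k * (1 + β * k ^ 2) := by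
  have : 0 < tanh k := by
    rw [tanh_eq_sinh_div_cosh]
    exact div_pos (sinh_pos_iff.2 hk) (cosh_pos k)
  positivity

theorem convexOn_sqrt_mul_tanh_mul (hβ : 1 / 3 ≤ β) :
    ConvexOn ℝ (Ioi 0) fun k => √(k * tanh k * (1 + β * k ^ 2)) := by
  refine convexOn_sqrt_of_hasDerivAt (convex_Ioi 0) isOpen_Ioi
    (fun k _ => hasDerivAt_mul_tanh_mul β k) (fun k _ => hasDerivAt_deriv_mul_tanh_mul β k)
    (fun k hk => mul_tanh_mul_pos β (by linarith) hk) (fun k hk => ?_)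
  rw [← sub_nonneg, two_mul_mul_deriv2_sub_deriv_sq]
  exact div_nonneg (convexityDefect_nonneg hβ hk) (by positivity)

end

theorem stmt_10_general (β μ₀ : ℝ) (hβ : 1 / 3 ≤ β) :
    ConcaveOn ℝ (Set.Ioi 0)
      (fun k : ℝ => k - Real.sqrt (μ₀ * k * Real.tanh k * (1 + β * k ^ 2))) := by
  refine ((concaveOn_id (convex_Ioi 0)).sub
    ((convexOn_sqrt_mul_tanh_mul β hβ).smul (sqrt_nonneg μ₀))).congr fun k hk => ?_
  have hg := mul_tanh_mul_pos β (by linarith) hk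
  simp only [Pi.sub_apply, id, smul_eq_mul, mul_assoc] at hg ⊢
  rw [sqrt_mul' μ₀ hg.le]

theorem stmt_10 (β μ₀ : ℝ) (hβ : 1 / 3 ≤ β) (hμ0 : 0 < μ₀) (hμ1 : μ₀ < 1) :
    ConcaveOn ℝ (Set.Ioi 0)
      (fun k : ℝ => k - Real.sqrt (μ₀ * k * Real.tanh k * (1 + β * k ^ 2))) :=
  stmt_10_general β μ₀ hβ
end
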